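/- Let H(x,y) = ½(y₁² + y₂² + a·x₁² + b·x₂²) + R(x₁,x₂) on ℝ⁴, where a < 0, b > 0 and R : ℝ² → ℝ is smooth with R(0) = 0, DR(0) = 0 and D²R(0) = 0 (so R(x) = O(|x|³) near 0). Then there exist constants c > 0, δ > 0 and E₀ > 0 such that for every 0 < E < E₀ and every (x,y) ∈ ℝ⁴ with H(x,y) = E, |x| ≤ δ, |y| ≤ δ and |x₁| ≤ c·√E, the derivative of H along the radial vector field Y = ½(x₁,x₂,y₁,y₂) satisfies dH·Y = E − R(x) + ½(x₁∂_{x₁}R(x) + x₂∂_{x₂}R(x)) > 0. -/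

import Mathlib

/-- Auxiliary: a function vanishing to second order at `0` satisfies
`‖fderiv R z‖ ≤ ε‖z‖` and `|R z| ≤ ε‖z‖²` near `0`. -/
lemma saddleCenter_aux (R : ℝ × ℝ → ℝ) (hR : ContDiff ℝ (⊤ : ℕ∞) R) (hR0 : R 0 = 0)
    (hR1 : fderiv ℝ R 0 = 0) (hR2 : fderiv ℝ (fderiv ℝ R) 0 = 0)
    {ε : ℝ} (hε : 0 < ε) :
    ∃ δ > (0 : ℝ), ∀ z : ℝ × ℝ, ‖z‖ ≤ δ →
      ‖fderiv ℝ R z‖ ≤ ε * ‖z‖ ∧ |R z| ≤ ε * ‖z‖ ^ 2 := by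
  have hRd : Differentiable ℝ R := hR.differentiable (by simp)
  have hfd : Differentiable ℝ (fderiv ℝ R) :=
    ((contDiff_infty_iff_fderiv.mp (hR.of_le (by simp))).2).differentiable (by simp)
  have h1 : HasFDerivAt (fderiv ℝ R) (fderiv ℝ (fderiv ℝ R) 0) 0 :=
    (hfd 0).hasFDerivAt
  rw [hR2] at h1
  have hlo : (fun z => fderiv ℝ R z) =o[nhds (0 : ℝ × ℝ)] fun z => z := by
    simpa [hR1] using h1.isLittleO
  obtain ⟨δ', hδ', hball⟩ := Metric.eventually_nhds_iff.mp (hlo.def hε)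
  refine ⟨δ' / 2, by positivity, fun z hz => ?_⟩
  have hbound : ∀ w : ℝ × ℝ, ‖w‖ ≤ δ' / 2 → ‖fderiv ℝ R w‖ ≤ ε * ‖w‖ := by
    intro w hw
    apply hball
    rw [dist_zero_right]
    linarith
  have hz1 := hbound z hz
  refine ⟨hz1, ?_⟩
  have key : ‖R z - R 0‖ ≤ ε * ‖z‖ * ‖z - 0‖ := by
    refine Convex.norm_image_sub_le_of_norm_fderiv_le (fun w _ => hRd w)
      ?_ (convex_closedBall (0 : ℝ × ℝ) ‖z‖) ?_ ?_
    · intro w hw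
      rw [Metric.mem_closedBall, dist_zero_right] at hw
      calc ‖fderiv ℝ R w‖ ≤ ε * ‖w‖ := hbound w (hw.trans hz)
        _ ≤ ε * ‖z‖ := by nlinarith [norm_nonneg w]
    · simp [Metric.mem_closedBall]
    · simp [Metric.mem_closedBall, dist_zero_right]
  rw [hR0, sub_zero, sub_zero] at key
  calc |R z| ≤ ε * ‖z‖ * ‖z‖ := key
    _ = ε * ‖z‖ ^ 2 := by ring


set_option maxHeartbeats 800000 in
/-- Auxiliary: the arithmetic core of the transversality estimate. -/
lemma saddleCenter_arith (a b K ε E x₁ x₂ y₁ y₂ r d₁ d₂ s : ℝ)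
    (ha : a < 0) (hb : 0 < b) (hKdef : K = 1 + (4 - 2 * a + b) / b) (hK : 0 < K)
    (hε : 0 < ε) (hεb : ε ≤ b / 4) (hεK : ε ≤ 1 / (4 * K))
    (hsdef : s = x₁ ^ 2 + x₂ ^ 2) (hE : 0 < E)
    (hH : (y₁ ^ 2 + y₂ ^ 2 + a * x₁ ^ 2 + b * x₂ ^ 2) / 2 + r = E)
    (hr : |r| ≤ ε * s) (hxd1 : |x₁ * d₁| ≤ ε * s) (hxd2 : |x₂ * d₂| ≤ ε * s)
    (hx1E : x₁ ^ 2 ≤ E) :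
    0 < E - r + 1 / 2 * (x₁ * d₁ + x₂ * d₂) := by
  obtain ⟨hrl, hru⟩ := abs_le.mp hr
  obtain ⟨hxd1l, _⟩ := abs_le.mp hxd1
  obtain ⟨hxd2l, _⟩ := abs_le.mp hxd2
  have ht : 0 ≤ y₁ ^ 2 + y₂ ^ 2 := by positivity
  have hs0 : 0 ≤ s := by rw [hsdef]; positivity
  have hbx2 : b * x₂ ^ 2 ≤ (2 - 2 * a) * E + 2 * ε * s := by nlinarith
  have hx2E : x₂ ^ 2 ≤ (K - 1) * E := by
    have hεs : 2 * ε * s ≤ (b / 2) * x₁ ^ 2 + (b / 2) * x₂ ^ 2 := by nlinarith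
    have h2 : (b / 2) * x₂ ^ 2 ≤ (2 - 2 * a) * E + (b / 2) * E := by nlinarith
    have hKm : K - 1 = (4 - 2 * a + b) / b := by rw [hKdef]; ring
    rw [hKm, div_mul_eq_mul_div, le_div_iff₀ hb]
    nlinarith
  have hsE : s ≤ K * E := by nlinarith
  have hεsE : ε * s ≤ E / 4 := by
    have h1 : ε * s ≤ ε * (K * E) := by nlinarith
    have h2 : ε * (K * E) ≤ (1 / (4 * K)) * (K * E) := by nlinarith
    have h3 : (1 / (4 * K)) * (K * E) = E / 4 := by field_simp
    linarith
  linarith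

set_option maxHeartbeats 800000 in
/-- Near a saddle-center of `H = ½(y₁²+y₂²+a x₁²+b x₂²) + R(x)` with
`a < 0 < b` and `R` vanishing to second order at the origin, there are `c, δ, E₀ > 0`
such that for every `0 < E < E₀` and every point of `H⁻¹(E)` with `|x| ≤ δ`,
`|y| ≤ δ`, `|x₁| ≤ c√E`, the derivative of `H` along the radial vector field
`Y = ½(x₁,x₂,y₁,y₂)` equals `E − R(x) + ½(x₁∂₁R(x) + x₂∂₂R(x))` and is positive. -/
theorem saddleCenter_radial_transversality
    (a b : ℝ) (ha : a < 0) (hb : 0 < b)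
    (R : ℝ × ℝ → ℝ) (hR : ContDiff ℝ (⊤ : ℕ∞) R) (hR0 : R 0 = 0)
    (hR1 : fderiv ℝ R 0 = 0) (hR2 : fderiv ℝ (fderiv ℝ R) 0 = 0) :
    ∃ c > (0 : ℝ), ∃ δ > (0 : ℝ), ∃ E₀ > (0 : ℝ), ∀ E : ℝ, 0 < E → E < E₀ →
      ∀ x₁ x₂ y₁ y₂ : ℝ,
        (y₁ ^ 2 + y₂ ^ 2 + a * x₁ ^ 2 + b * x₂ ^ 2) / 2 + R (x₁, x₂) = E →
        Real.sqrt (x₁ ^ 2 + x₂ ^ 2) ≤ δ →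
        Real.sqrt (y₁ ^ 2 + y₂ ^ 2) ≤ δ →
        |x₁| ≤ c * Real.sqrt E →
        1 / 2 * (x₁ * (a * x₁ + fderiv ℝ R (x₁, x₂) (1, 0))
            + x₂ * (b * x₂ + fderiv ℝ R (x₁, x₂) (0, 1))
            + y₁ * y₁ + y₂ * y₂)
          = E - R (x₁, x₂)
            + 1 / 2 * (x₁ * fderiv ℝ R (x₁, x₂) (1, 0) + x₂ * fderiv ℝ R (x₁, x₂) (0, 1)) ∧
        0 < E - R (x₁, x₂)
            + 1 / 2 * (x₁ * fderiv ℝ R (x₁, x₂) (1, 0) + x₂ * fderiv ℝ R (x₁, x₂) (0, 1)) := by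
  obtain ⟨K, hKdef⟩ : ∃ K : ℝ, K = 1 + (4 - 2 * a + b) / b := ⟨_, rfl⟩
  have hK : 0 < K := by
    have : 0 < (4 - 2 * a + b) / b := div_pos (by linarith) hb
    linarith
  obtain ⟨ε, hεdef⟩ : ∃ ε : ℝ, ε = min (b / 4) (1 / (4 * K)) := ⟨_, rfl⟩
  have hε : 0 < ε := hεdef ▸ lt_min (by positivity) (div_pos one_pos (by linarith))
  have hεb : ε ≤ b / 4 := hεdef ▸ min_le_left _ _
  have hεK : ε ≤ 1 / (4 * K) := hεdef ▸ min_le_right _ _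
  obtain ⟨δ, hδ, hδR⟩ := saddleCenter_aux R hR hR0 hR1 hR2 hε
  refine ⟨1, one_pos, δ, hδ, 1, one_pos, fun E hE hE1 x₁ x₂ y₁ y₂ hH hx hy hx1 => ?_⟩
  obtain ⟨s, hsdef⟩ : ∃ s : ℝ, s = x₁ ^ 2 + x₂ ^ 2 := ⟨_, rfl⟩
  have hs0 : 0 ≤ s := by rw [hsdef]; positivity
  have hss : Real.sqrt s * Real.sqrt s = s := Real.mul_self_sqrt hs0
  -- norm estimates
  have hx1s : |x₁| ≤ Real.sqrt s := by
    rw [← Real.sqrt_sq_eq_abs]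
    exact Real.sqrt_le_sqrt (show x₁ ^ 2 ≤ s by rw [hsdef]; nlinarith [sq_nonneg x₂])
  have hx2s : |x₂| ≤ Real.sqrt s := by
    rw [← Real.sqrt_sq_eq_abs]
    exact Real.sqrt_le_sqrt (show x₂ ^ 2 ≤ s by rw [hsdef]; nlinarith [sq_nonneg x₁])
  have hzn : ‖((x₁, x₂) : ℝ × ℝ)‖ ≤ Real.sqrt s := by
    rw [Prod.norm_def]
    simp only [Real.norm_eq_abs]
    exact max_le hx1s hx2s
  have hzδ : ‖((x₁, x₂) : ℝ × ℝ)‖ ≤ δ := hzn.trans (by rw [hsdef]; exact hx)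
  obtain ⟨hfd, hRz⟩ := hδR (x₁, x₂) hzδ
  -- bound on R
  have hr : |R (x₁, x₂)| ≤ ε * s := by
    calc |R (x₁, x₂)| ≤ ε * ‖((x₁, x₂) : ℝ × ℝ)‖ ^ 2 := hRz
      _ ≤ ε * s := by
        have h1 : ‖((x₁, x₂) : ℝ × ℝ)‖ ^ 2 ≤ s := by
          have := pow_le_pow_left₀ (norm_nonneg ((x₁, x₂) : ℝ × ℝ)) hzn 2
          rwa [Real.sq_sqrt hs0] at this
        exact mul_le_mul_of_nonneg_left h1 hε.le
  -- bounds on the derivative terms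
  have hfds : ‖fderiv ℝ R (x₁, x₂)‖ ≤ ε * Real.sqrt s := by
    calc ‖fderiv ℝ R (x₁, x₂)‖ ≤ ε * ‖((x₁, x₂) : ℝ × ℝ)‖ := hfd
      _ ≤ ε * Real.sqrt s := mul_le_mul_of_nonneg_left hzn hε.le
  have hone : ‖((1, 0) : ℝ × ℝ)‖ = 1 := by
    rw [Prod.norm_def]; simp
  have hone' : ‖((0, 1) : ℝ × ℝ)‖ = 1 := by
    rw [Prod.norm_def]; simp
  have hd1 : |fderiv ℝ R (x₁, x₂) (1, 0)| ≤ ε * Real.sqrt s := by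
    calc |fderiv ℝ R (x₁, x₂) (1, 0)| ≤ ‖fderiv ℝ R (x₁, x₂)‖ * ‖((1, 0) : ℝ × ℝ)‖ :=
      (fderiv ℝ R (x₁, x₂)).le_opNorm _
      _ = ‖fderiv ℝ R (x₁, x₂)‖ := by rw [hone, mul_one]
      _ ≤ ε * Real.sqrt s := hfds
  have hd2 : |fderiv ℝ R (x₁, x₂) (0, 1)| ≤ ε * Real.sqrt s := by
    calc |fderiv ℝ R (x₁, x₂) (0, 1)| ≤ ‖fderiv ℝ R (x₁, x₂)‖ * ‖((0, 1) : ℝ × ℝ)‖ :=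
      (fderiv ℝ R (x₁, x₂)).le_opNorm _
      _ = ‖fderiv ℝ R (x₁, x₂)‖ := by rw [hone', mul_one]
      _ ≤ ε * Real.sqrt s := hfds
  have hxd1 : |x₁ * fderiv ℝ R (x₁, x₂) (1, 0)| ≤ ε * s := by
    rw [abs_mul]
    calc |x₁| * |fderiv ℝ R (x₁, x₂) (1, 0)| ≤ Real.sqrt s * (ε * Real.sqrt s) :=
      mul_le_mul hx1s hd1 (abs_nonneg _) (Real.sqrt_nonneg s)
      _ = ε * s := by linear_combination ε * hss
  have hxd2 : |x₂ * fderiv ℝ R (x₁, x₂) (0, 1)| ≤ ε * s := by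
    rw [abs_mul]
    calc |x₂| * |fderiv ℝ R (x₁, x₂) (0, 1)| ≤ Real.sqrt s * (ε * Real.sqrt s) :=
      mul_le_mul hx2s hd2 (abs_nonneg _) (Real.sqrt_nonneg s)
      _ = ε * s := by linear_combination ε * hss
  -- |x₁| ≤ √E gives x₁² ≤ E
  have hx1E : x₁ ^ 2 ≤ E := by
    have h1 : |x₁| ≤ Real.sqrt E := by rwa [one_mul] at hx1
    have := Real.mul_self_sqrt hE.le
    nlinarith [abs_nonneg x₁, sq_abs x₁]
  constructor
  · linear_combination hH
  · exact saddleCenter_arith a b K ε E x₁ x₂ y₁ y₂ (R (x₁, x₂))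
      (fderiv ℝ R (x₁, x₂) (1, 0)) (fderiv ℝ R (x₁, x₂) (0, 1)) s
      ha hb hKdef hK hε hεb hεK hsdef hE hH hr hxd1 hxd2 hx1E
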